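/- Let λ₁, λ₂, λ₃ > 0 with λ₁ + λ₂ + λ₃ = 1, take F₁ = F₂ = F₃ = 0, and define σ_i, w_i as above. If 3λ_i² + λ_i(λ_j + λ_k) − λ_j λ_k > 0 for every choice of mutually different indices i, j, k ∈ {1,2,3}, then for each i = 1,2,3: 0 < σ_i ≤ w_i. -/
import Mathlib


noncomputable section

/-- `q(x,y;F_x,F_y) = (x − F_x²/x)(y − F_y²/y)`. -/
def qfun (x y Fx Fy : ℝ) : ℝ := (x - Fx ^ 2 / x) * (y - Fy ^ 2 / y)

/-- `r(x,y;F_x,F_y) = −(1 − F_x²/x − F_y²/y)`. -/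
def rfun (x y Fx Fy : ℝ) : ℝ := -(1 - Fx ^ 2 / x - Fy ^ 2 / y)

/-- `g(x,y;F_x,F_y) = 2 q (x + y − 1 − r) / (3(x+y)²)`. -/
def gfun (x y Fx Fy : ℝ) : ℝ :=
  2 * qfun x y Fx Fy * (x + y - 1 - rfun x y Fx Fy) / (3 * (x + y) ^ 2)

/-- `σ₁ = λ₁ − g(λ₁,λ₂;F₁,F₂) − g(λ₁,λ₃;F₁,F₃)`. -/
def sig1 (l1 l2 l3 F1 F2 F3 : ℝ) : ℝ := l1 - gfun l1 l2 F1 F2 - gfun l1 l3 F1 F3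

/-- `σ₂ = λ₂ − g(λ₂,λ₁;F₂,F₁) − g(λ₂,λ₃;F₂,F₃)`. -/
def sig2 (l1 l2 l3 F1 F2 F3 : ℝ) : ℝ := l2 - gfun l2 l1 F2 F1 - gfun l2 l3 F2 F3

/-- `σ₃ = λ₃ − g(λ₃,λ₁;F₃,F₁) − g(λ₃,λ₂;F₃,F₂)`. -/
def sig3 (l1 l2 l3 F1 F2 F3 : ℝ) : ℝ := l3 - gfun l3 l1 F3 F1 - gfun l3 l2 F3 F2

/-- `w₁ = σ₁ + 2g(λ₂,λ₃;F₂,F₃)`. -/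
def w1 (l1 l2 l3 F1 F2 F3 : ℝ) : ℝ := sig1 l1 l2 l3 F1 F2 F3 + 2 * gfun l2 l3 F2 F3

/-- `w₂ = σ₂ + 2g(λ₁,λ₃;F₁,F₃)`. -/
def w2 (l1 l2 l3 F1 F2 F3 : ℝ) : ℝ := sig2 l1 l2 l3 F1 F2 F3 + 2 * gfun l1 l3 F1 F3

/-- `w₃ = σ₃ + 2g(λ₁,λ₂;F₁,F₂)`. -/
def w3 (l1 l2 l3 F1 F2 F3 : ℝ) : ℝ := sig3 l1 l2 l3 F1 F2 F3 + 2 * gfun l1 l2 F1 F2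


lemma gval (x y : ℝ) (hx : 0 < x) (hy : 0 < y) :
    gfun x y 0 0 = 2 * x * y / (3 * (x + y)) := by
  unfold gfun qfun rfun
  have h : x + y ≠ 0 := by positivity
  field_simp
  ring

lemma gpos (x y : ℝ) (hx : 0 < x) (hy : 0 < y) : 0 < gfun x y 0 0 := by
  rw [gval x y hx hy]; positivity

lemma sigpos (a b c : ℝ) (ha : 0 < a) (hb : 0 < b) (hc : 0 < c)
    (h : 0 < 3 * a ^ 2 + a * (b + c) - b * c) :
    0 < a - gfun a b 0 0 - gfun a c 0 0 := by
  rw [gval a b ha hb, gval a c ha hc]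
  have hab : 0 < a + b := by linarith
  have hac : 0 < a + c := by linarith
  rw [show a - 2 * a * b / (3 * (a + b)) - 2 * a * c / (3 * (a + c))
      = a * (3 * a ^ 2 + a * (b + c) - b * c) / (3 * (a + b) * (a + c)) by
    field_simp; ring]
  positivity

/-- Corollary: for vanishing first-order moments, under the quadratic conditions
`3λ_i² + λ_i(λ_j+λ_k) − λ_jλ_k > 0`, one has `0 < σ_i ≤ w_i` for each `i`. -/
theorem nonnegative_ansatz_zero_flux (l1 l2 l3 : ℝ)
    (h1 : 0 < l1) (h2 : 0 < l2) (h3 : 0 < l3) (hsum : l1 + l2 + l3 = 1)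
    (hc1 : 0 < 3 * l1 ^ 2 + l1 * (l2 + l3) - l2 * l3)
    (hc2 : 0 < 3 * l2 ^ 2 + l2 * (l1 + l3) - l1 * l3)
    (hc3 : 0 < 3 * l3 ^ 2 + l3 * (l1 + l2) - l1 * l2) :
    (0 < sig1 l1 l2 l3 0 0 0 ∧ sig1 l1 l2 l3 0 0 0 ≤ w1 l1 l2 l3 0 0 0) ∧
    (0 < sig2 l1 l2 l3 0 0 0 ∧ sig2 l1 l2 l3 0 0 0 ≤ w2 l1 l2 l3 0 0 0) ∧
    (0 < sig3 l1 l2 l3 0 0 0 ∧ sig3 l1 l2 l3 0 0 0 ≤ w3 l1 l2 l3 0 0 0) := by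
  have H1 := sigpos l1 l2 l3 h1 h2 h3 hc1
  have H2 := sigpos l2 l1 l3 h2 h1 h3 (by nlinarith)
  have H3 := sigpos l3 l1 l2 h3 h1 h2 (by nlinarith)
  refine ⟨⟨H1, ?_⟩, ⟨H2, ?_⟩, ⟨H3, ?_⟩⟩ <;>
    simp only [w1, w2, w3] <;>
    nlinarith [gpos l2 l3 h2 h3, gpos l1 l3 h1 h3, gpos l1 l2 h1 h2]

end
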